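/- arXiv:2405.08942 — 10 statements merged into one kernel-verified Lean document; each statement's English description precedes it below -/
import Mathlib

section
/- For any ring R with identity, the Zhou radical δ(R) is a semiprime ideal of R; that is, for every a ∈ R, if a·r·a ∈ δ(R) for all r ∈ R, then a ∈ δ(R). -/
/-- A right ideal `I` of `R` (a submodule of `R` as a right `R`-module, i.e. an
`Rᵐᵒᵖ`-submodule) is essential if every right ideal meeting it trivially is trivial. -/
def IsEssentialRightIdeal (R : Type*) [Ring R] (I : Submodule Rᵐᵒᵖ R) : Prop :=
  ∀ K : Submodule Rᵐᵒᵖ R, K ⊓ I = ⊥ → K = ⊥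

/-- The Zhou radical `δ(R)`: the intersection of all essential maximal right ideals of `R`
(the whole ring if there are no essential maximal right ideals). -/
def zhouRadical (R : Type*) [Ring R] : Set R :=
  ⋂₀ { S : Set R | ∃ I : Submodule Rᵐᵒᵖ R, IsCoatom I ∧ IsEssentialRightIdeal R I ∧ S = ↑I }

/-- A ring `R` is `δ`-reversible if `a * b = 0` implies `b * a ∈ δ(R)`. -/
def IsDeltaReversible (R : Type*) [Ring R] : Prop :=
  ∀ a b : R, a * b = 0 → b * a ∈ zhouRadical R

/-!
If a maximal right ideal `I` misses `a`, then `I + aR = R`, so `1 = m + a c` with `m ∈ I`;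
multiplying on the right by `a` gives `a - a c a = m a ∈ I`. Hence `a c a ∈ I` would force
`a ∈ I`, and the Zhou radical, being an intersection of maximal right ideals, is semiprime.
-/

theorem mem_zhouRadical_iff {R : Type*} [Ring R] {a : R} :
    a ∈ zhouRadical R ↔
      ∀ I : Submodule Rᵐᵒᵖ R, IsCoatom I → IsEssentialRightIdeal R I → a ∈ I := by
  simp only [zhouRadical, Set.mem_sInter, Set.mem_ofPred_eq]
  constructor
  · exact fun h I hI hess => h I ⟨I, hI, hess, rfl⟩
  · rintro h _ ⟨I, hI, hess, rfl⟩
    exact h I hI hess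

theorem exists_sub_mul_mul_mem_of_one_mem_sup_span {R : Type*} [Ring R]
    {I : Submodule Rᵐᵒᵖ R} {a : R} (h : 1 ∈ I ⊔ Submodule.span Rᵐᵒᵖ {a}) :
    ∃ c : R, a - a * c * a ∈ I := by
  obtain ⟨m, hm, _, hc, hmc⟩ := Submodule.mem_sup.mp h
  obtain ⟨c, rfl⟩ := Submodule.mem_span_singleton.mp hc
  refine ⟨c.unop, ?_⟩
  have hma : a - a * c.unop * a = m * a := by
    rw [MulOpposite.smul_eq_mul_unop, ← eq_sub_iff_add_eq] at hmc
    rw [hmc, sub_mul, one_mul]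
  rw [hma]
  exact I.smul_mem (MulOpposite.op a) hm

theorem IsCoatom.exists_sub_mul_mul_mem {R : Type*} [Ring R] {I : Submodule Rᵐᵒᵖ R}
    (hI : IsCoatom I) {a : R} (ha : a ∉ I) : ∃ c : R, a - a * c * a ∈ I := by
  have hlt : I < I ⊔ Submodule.span Rᵐᵒᵖ {a} :=
    left_lt_sup.2 fun hle => ha (Submodule.span_singleton_le_iff_mem _ _ |>.1 hle)
  exact exists_sub_mul_mul_mem_of_one_mem_sup_span ((hI.lt_iff.1 hlt).symm ▸ Submodule.mem_top)

/-- The Zhou radical is a semiprime ideal: if `a * r * a ∈ δ(R)` for all `r`, then `a ∈ δ(R)`. -/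
theorem zhouRadical_semiprime (R : Type*) [Ring R] (a : R)
    (h : ∀ r : R, a * r * a ∈ zhouRadical R) : a ∈ zhouRadical R := by
  refine mem_zhouRadical_iff.2 fun I hI hess => ?_
  by_contra ha
  obtain ⟨c, hc⟩ := hI.exists_sub_mul_mul_mem ha
  have hcI : a * c * a ∈ I := mem_zhouRadical_iff.1 (h c) I hI hess
  exact ha (by simpa using I.add_mem hc hcI)
end

section
/- Let R be a ring whose right socle Soc(R_R) is contained in the Jacobson radical J(R). Then R is δ-reversible if and only if R is J-reversible. -/
/-- The Jacobson radical `J(R)`: the intersection of all maximal right ideals of `R`. -/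
def jacobsonRight (R : Type*) [Ring R] : Set R :=
  ⋂₀ { S : Set R | ∃ I : Submodule Rᵐᵒᵖ R, IsCoatom I ∧ S = ↑I }

/-- A ring `R` is J-reversible if `a * b = 0` implies `b * a ∈ J(R)`. -/
def IsJReversible (R : Type*) [Ring R] : Prop :=
  ∀ a b : R, a * b = 0 → b * a ∈ jacobsonRight R

/-- The right socle of `R`: the sum of all minimal (simple) right ideals of `R`. -/
def rightSocle (R : Type*) [Ring R] : Submodule Rᵐᵒᵖ R :=
  sSup {I : Submodule Rᵐᵒᵖ R | IsAtom I}

/-! A right ideal `K` with `K ∩ M = 0` for a maximal right ideal `M` is either `0` or a complement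
of `M`, hence simple by modularity of the lattice of right ideals. Simple right ideals lie in
`Soc(R_R) ⊆ J(R) ⊆ M`, so `K = 0`. Thus every maximal right ideal is essential, `δ(R) = J(R)`, and
the two reversibility conditions coincide. -/

theorem IsCoatom.eq_bot_of_inf_eq_bot_of_forall_isAtom_le {α : Type*} [Lattice α] [BoundedOrder α]
    [IsModularLattice α] {m k : α} (hm : IsCoatom m) (hatoms : ∀ a, IsAtom a → a ≤ m)
    (hkm : k ⊓ m = ⊥) : k = ⊥ := by
  have hkm_le : k ≤ m := by
    by_contra hk_not_le
    have hsup : k ⊔ m = ⊤ := sup_comm m k ▸ hm.2 _ (left_lt_sup.mpr hk_not_le)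
    exact hk_not_le (hatoms k ((IsCompl.of_eq hkm hsup).isAtom_iff_isCoatom.mpr hm))
  rwa [inf_eq_left.mpr hkm_le] at hkm

section

variable (R : Type*) [Ring R]

theorem jacobsonRight_subset_of_isCoatom {I : Submodule Rᵐᵒᵖ R} (hI : IsCoatom I) :
    jacobsonRight R ⊆ I :=
  Set.sInter_subset_of_mem ⟨I, hI, rfl⟩

theorem le_rightSocle_of_isAtom {I : Submodule Rᵐᵒᵖ R} (hI : IsAtom I) : I ≤ rightSocle R :=
  le_sSup (s := {I : Submodule Rᵐᵒᵖ R | IsAtom I}) hI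

theorem isEssentialRightIdeal_of_isCoatom (h : (rightSocle R : Set R) ⊆ jacobsonRight R)
    {I : Submodule Rᵐᵒᵖ R} (hI : IsCoatom I) : IsEssentialRightIdeal R I := fun _ hK =>
  hI.eq_bot_of_inf_eq_bot_of_forall_isAtom_le
    (fun _ hA _ hx => jacobsonRight_subset_of_isCoatom R hI (h (le_rightSocle_of_isAtom R hA hx)))
    hK

theorem zhouRadical_eq_jacobsonRight (h : (rightSocle R : Set R) ⊆ jacobsonRight R) :
    zhouRadical R = jacobsonRight R := by
  unfold zhouRadical jacobsonRight
  congr 1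
  ext S
  constructor
  · rintro ⟨I, hI, -, rfl⟩
    exact ⟨I, hI, rfl⟩
  · rintro ⟨I, hI, rfl⟩
    exact ⟨I, hI, isEssentialRightIdeal_of_isCoatom R h hI, rfl⟩

end

/-- If `Soc(R_R) ⊆ J(R)`, then `R` is δ-reversible iff it is J-reversible. -/
theorem deltaReversible_iff_jReversible_of_socle_le_jacobson (R : Type*) [Ring R]
    (h : (rightSocle R : Set R) ⊆ jacobsonRight R) :
    IsDeltaReversible R ↔ IsJReversible R := by
  unfold IsDeltaReversible IsJReversible
  rw [zhouRadical_eq_jacobsonRight R h]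
end

section
/- Let R be a δ-reversible ring. Then for every idempotent e ∈ R (e² = e), one has eR(1−e) + (1−e)Re ⊆ δ(R); that is, for all x, y ∈ R, ex(1−e) + (1−e)ye ∈ δ(R). -/
theorem add_mem_zhouRadical {R : Type*} [Ring R] {a b : R} (ha : a ∈ zhouRadical R)
    (hb : b ∈ zhouRadical R) : a + b ∈ zhouRadical R := by
  rintro _ ⟨I, hI, hIess, rfl⟩
  exact I.add_mem (ha _ ⟨I, hI, hIess, rfl⟩) (hb _ ⟨I, hI, hIess, rfl⟩)

theorem IsDeltaReversible.mul_mul_one_sub_mem_zhouRadical {R : Type*} [Ring R]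
    (hrev : IsDeltaReversible R) {e : R} (he : IsIdempotentElem e) (x : R) :
    e * x * (1 - e) ∈ zhouRadical R := by
  have hzero : x * (1 - e) * e = 0 := by
    rw [mul_assoc, sub_mul, one_mul, he.eq, sub_self, mul_zero]
  simpa only [mul_assoc] using hrev _ _ hzero

/-- In a δ-reversible ring, `eR(1-e) + (1-e)Re ⊆ δ(R)` for every idempotent `e`. -/
theorem corner_subset_zhouRadical_of_deltaReversible (R : Type*) [Ring R]
    (hrev : IsDeltaReversible R) (e : R) (he : e * e = e) :
    ∀ x y : R, e * x * (1 - e) + (1 - e) * y * e ∈ zhouRadical R := by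
  intro x y
  have he : IsIdempotentElem e := he
  have hcorner := hrev.mul_mul_one_sub_mem_zhouRadical he.one_sub y
  rw [sub_sub_cancel] at hcorner
  exact add_mem_zhouRadical (hrev.mul_mul_one_sub_mem_zhouRadical he x) hcorner
end

section
/- If R is a local ring, then δ#(R) = δ(R), where δ#(R) = {x ∈ R : x^n ∈ δ(R) for some positive integer n}. -/
/-!
In a local ring every element `x` outside a maximal right ideal `I` is a unit: writing
`1 = m + x * r` with `m ∈ I` a nonunit forces `x * r` to be a unit, and a local ring is
Dedekind-finite because its only idempotents are `0` and `1`. Hence `x ∉ I` gives `x ^ n ∉ I`,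
so `x ^ n ∈ δ(R)` implies `x ∈ δ(R)`.
-/

section LocalRing

variable {R : Type*} [Ring R]

theorem IsIdempotentElem.eq_zero_or_one_of_nonunits_add
    (hlocal : ∀ a b : R, ¬ IsUnit a → ¬ IsUnit b → ¬ IsUnit (a + b))
    {e : R} (he : IsIdempotentElem e) : e = 0 ∨ e = 1 := by
  have hunit : IsUnit e ∨ IsUnit (1 - e) := by
    by_contra! h
    exact hlocal e (1 - e) h.1 h.2 (by rw [add_sub_cancel]; exact isUnit_one)
  rcases hunit with hu | hu
  · exact Or.inr ((IsIdempotentElem.iff_eq_one_of_isUnit hu).mp he)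
  · exact Or.inl (by simpa using (IsIdempotentElem.iff_eq_one_of_isUnit hu).mp he.one_sub)

theorem isDedekindFiniteMonoid_of_nonunits_add
    (hlocal : ∀ a b : R, ¬ IsUnit a → ¬ IsUnit b → ¬ IsUnit (a + b)) :
    IsDedekindFiniteMonoid R where
  mul_eq_one_symm {x y} h := by
    have hidem : IsIdempotentElem (y * x) := by
      rw [IsIdempotentElem, mul_assoc, ← mul_assoc x, h, one_mul]
    rcases hidem.eq_zero_or_one_of_nonunits_add hlocal with h0 | h1
    · have h10 : (1 : R) = 0 := by
        calc (1 : R) = x * (y * x) * y := by rw [← mul_assoc x y x, h, one_mul, h]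
          _ = 0 := by rw [h0, mul_zero, zero_mul]
      have := subsingleton_of_zero_eq_one h10.symm
      exact Subsingleton.elim _ _
    · exact h1

end LocalRing

section RightIdeal

variable {R : Type*} [Ring R] {I : Submodule Rᵐᵒᵖ R}

theorem Submodule.not_isUnit_of_mem_of_ne_top (hI : I ≠ ⊤) {z : R} (hz : z ∈ I) :
    ¬ IsUnit z := by
  rintro ⟨u, rfl⟩
  have h1 : (1 : R) ∈ I := by simpa using I.smul_mem (MulOpposite.op ((u⁻¹ : Rˣ) : R)) hz
  exact hI <| Submodule.eq_top_iff'.mpr fun w => by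
    simpa using I.smul_mem (MulOpposite.op w) h1

theorem Submodule.exists_add_mul_eq_one_of_isCoatom (hI : IsCoatom I) {x : R} (hx : x ∉ I) :
    ∃ m ∈ I, ∃ r : R, m + x * r = 1 := by
  have hsup : I ⊔ Submodule.span Rᵐᵒᵖ {x} = ⊤ :=
    hI.2 _ (left_lt_sup.mpr fun hle => hx (hle (Submodule.mem_span_singleton_self x)))
  obtain ⟨m, hm, s, hs, hms⟩ := Submodule.mem_sup.mp (hsup ▸ Submodule.mem_top : (1 : R) ∈ _)
  obtain ⟨r, rfl⟩ := Submodule.mem_span_singleton.mp hs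
  exact ⟨m, hm, r.unop, hms⟩

theorem Submodule.isUnit_of_notMem_of_isCoatom
    (hlocal : ∀ a b : R, ¬ IsUnit a → ¬ IsUnit b → ¬ IsUnit (a + b))
    (hI : IsCoatom I) {x : R} (hx : x ∉ I) : IsUnit x := by
  have := isDedekindFiniteMonoid_of_nonunits_add hlocal
  obtain ⟨m, hm, r, hmr⟩ := Submodule.exists_add_mul_eq_one_of_isCoatom hI hx
  have hxr : IsUnit (x * r) := by
    by_contra hxr
    exact hlocal m (x * r) (Submodule.not_isUnit_of_mem_of_ne_top hI.1 hm) hxr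
      (hmr ▸ isUnit_one)
  exact isUnit_of_mul_isUnit_left hxr

theorem Submodule.mem_of_pow_mem_of_isCoatom
    (hlocal : ∀ a b : R, ¬ IsUnit a → ¬ IsUnit b → ¬ IsUnit (a + b))
    (hI : IsCoatom I) {x : R} {n : ℕ} (hxn : x ^ n ∈ I) : x ∈ I := by
  by_contra hx
  exact Submodule.not_isUnit_of_mem_of_ne_top hI.1 hxn
    ((Submodule.isUnit_of_notMem_of_isCoatom hlocal hI hx).pow n)

end RightIdeal

/-- In a local ring (nonunits are closed under addition), `δ#(R) = δ(R)`. -/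
theorem deltaSharp_eq_zhouRadical_of_local (R : Type*) [Ring R]
    (hlocal : ∀ a b : R, ¬ IsUnit a → ¬ IsUnit b → ¬ IsUnit (a + b)) :
    {x : R | ∃ n : ℕ, 0 < n ∧ x ^ n ∈ zhouRadical R} = zhouRadical R := by
  ext x
  constructor
  · rintro ⟨n, -, hxn⟩ S ⟨I, hI, hess, rfl⟩
    exact Submodule.mem_of_pow_mem_of_isCoatom hlocal hI (hxn I ⟨I, hI, hess, rfl⟩)
  · exact fun hx => ⟨1, one_pos, by rwa [pow_one]⟩
end

section
/- Let R be a ring such that the quotient R/δ(R) is reduced, i.e., for every x ∈ R, x² ∈ δ(R) implies x ∈ δ(R). Then R is δ-reversible. -/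
theorem zero_mem_zhouRadical (R : Type*) [Ring R] : (0 : R) ∈ zhouRadical R := by
  rintro _ ⟨I, -, -, rfl⟩
  exact I.zero_mem

theorem mul_mul_self_eq_zero_of_mul_eq_zero {R : Type*} [SemigroupWithZero R]
    {a b : R} (hab : a * b = 0) : b * a * (b * a) = 0 := by
  rw [mul_assoc, ← mul_assoc a, hab, zero_mul, mul_zero]

/-- If `R/δ(R)` is reduced (i.e. `x² ∈ δ(R)` implies `x ∈ δ(R)`), then `R` is δ-reversible. -/
theorem deltaReversible_of_quotient_reduced (R : Type*) [Ring R]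
    (h : ∀ x : R, x * x ∈ zhouRadical R → x ∈ zhouRadical R) :
    IsDeltaReversible R := by
  intro a b hab
  apply h
  rw [mul_mul_self_eq_zero_of_mul_eq_zero hab]
  exact zero_mem_zhouRadical R
end

section
/- Let R be a ring and let a, p ∈ R be such that a^n = 0 for some positive integer n, p² = p, ap = pa, and a + p ∈ δ(R). Then p ∈ δ(R). -/
theorem mul_mem_zhouRadical {R : Type*} [Ring R] {x : R} (hx : x ∈ zhouRadical R) (y : R) :
    x * y ∈ zhouRadical R := by
  rintro _ ⟨I, hI, hIess, rfl⟩
  exact I.smul_mem (MulOpposite.op y) (hx _ ⟨I, hI, hIess, rfl⟩)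

theorem IsIdempotentElem.add_mul_self_eq_mul_one_add {R : Type*} [Ring R] {a p : R}
    (hp : IsIdempotentElem p) (hcomm : Commute a p) : (a + p) * p = p * (1 + a) := by
  rw [add_mul, hp.eq, mul_add, mul_one, hcomm.eq, add_comm]

theorem idem_mem_zhouRadical_of_nilpotent_general (R : Type*) [Ring R] (a p : R)
    (n : ℕ) (ha : a ^ n = 0) (hp : p * p = p) (hcomm : a * p = p * a)
    (hap : a + p ∈ zhouRadical R) : p ∈ zhouRadical R := by
  have hunit : IsUnit (1 + a) := IsNilpotent.isUnit_one_add ⟨n, ha⟩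
  have hfactor : p = (a + p) * (p * ↑hunit.unit⁻¹) := by
    rw [← mul_assoc, IsIdempotentElem.add_mul_self_eq_mul_one_add hp hcomm, mul_assoc,
      hunit.mul_val_inv, mul_one]
  rw [hfactor]
  exact mul_mem_zhouRadical hap _

/-- If `a` is nilpotent, `p` is an idempotent commuting with `a`, and `a + p ∈ δ(R)`,
then `p ∈ δ(R)`. -/
theorem idem_mem_zhouRadical_of_nilpotent (R : Type*) [Ring R] (a p : R)
    (n : ℕ) (hn : 0 < n) (ha : a ^ n = 0) (hp : p * p = p) (hcomm : a * p = p * a)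
    (hap : a + p ∈ zhouRadical R) : p ∈ zhouRadical R :=
  idem_mem_zhouRadical_of_nilpotent_general R a p n ha hp hcomm hap
end

section
/- The matrix ring M₂(ℤ) of 2×2 matrices over the integers is not δ-reversible; that is, there exist A, B ∈ M₂(ℤ) with AB = 0 but BA ∉ δ(M₂(ℤ)). -/
open Matrix nonZeroDivisors

lemma zhouRadical_subset {S : Type*} [Ring S] {I : Submodule Sᵐᵒᵖ S} (hmax : IsCoatom I)
    (hess : IsEssentialRightIdeal S I) : zhouRadical S ⊆ I :=
  Set.sInter_subset_of_mem ⟨I, hmax, hess, rfl⟩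

lemma isEssentialRightIdeal_of_mem_center {S : Type*} [Ring S] {I : Submodule Sᵐᵒᵖ S} {c : S}
    (hcI : c ∈ I) (hcenter : c ∈ Subring.center S) (hreg : c ∈ nonZeroDivisorsRight S) :
    IsEssentialRightIdeal S I := by
  intro K hK
  rw [Submodule.eq_bot_iff]
  intro x hx
  have hxc : x * c ∈ K ⊓ I :=
    ⟨K.smul_mem (MulOpposite.op c) hx,
      Subring.mem_center_iff.mp hcenter x ▸ I.smul_mem (MulOpposite.op x) hcI⟩
  rw [hK, Submodule.mem_bot] at hxc
  exact hreg x hxc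

section RowIdeal

variable {R : Type*} [CommRing R] {n : Type*} [Fintype n] [DecidableEq n]

def Matrix.rowIdeal (I : Ideal R) (i : n) : Submodule (Matrix n n R)ᵐᵒᵖ (Matrix n n R) where
  carrier := {M | ∀ j, M i j ∈ I}
  add_mem' hM hN j := I.add_mem (hM j) (hN j)
  zero_mem' _ := I.zero_mem
  smul_mem' c M hM j := by
    change (M * c.unop) i j ∈ I
    rw [mul_apply]
    exact I.sum_mem fun k _ => I.mul_mem_right _ (hM k)

variable {I : Ideal R} {i : n}

@[simp]
lemma Matrix.mem_rowIdeal {M : Matrix n n R} : M ∈ rowIdeal I i ↔ ∀ j, M i j ∈ I := Iff.rfl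

lemma Matrix.sub_single_mem_rowIdeal {M : Matrix n n R} (hM : ∀ j, j ≠ i → M i j ∈ I)
    (hMi : M i i - 1 ∈ I) : M - single i i 1 ∈ rowIdeal I i := by
  intro j
  rcases eq_or_ne j i with rfl | hj
  · simpa using hMi
  · simpa [hj.symm] using hM j hj

lemma Matrix.single_mem_of_rowIdeal_lt (hI : I.IsMaximal)
    {J : Submodule (Matrix n n R)ᵐᵒᵖ (Matrix n n R)} (hJ : rowIdeal I i < J) :
    single i i 1 ∈ J := by
  obtain ⟨M, hMJ, hMI⟩ := SetLike.exists_of_lt hJ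
  obtain ⟨j, hj⟩ : ∃ j, M i j ∉ I := by simpa using hMI
  obtain ⟨y, z, hz, hyz⟩ := hI.exists_inv hj
  -- `M * e_{ji}(y)` has row `i` equal to `(0, …, M i j * y, …, 0)`, and `M i j * y ≡ 1 mod I`.
  have hN : M * single j i y ∈ J := J.smul_mem (MulOpposite.op (single j i y)) hMJ
  have hrest : M * single j i y - single i i 1 ∈ rowIdeal I i := by
    refine sub_single_mem_rowIdeal (fun k hk => by simp [hk, I.zero_mem]) ?_
    rw [mul_single_apply_same, mul_comm, ← hyz]
    simpa using I.neg_mem hz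
  simpa using J.sub_mem hN (hJ.le hrest)

lemma Matrix.eq_top_of_rowIdeal_le {J : Submodule (Matrix n n R)ᵐᵒᵖ (Matrix n n R)}
    (hJ : rowIdeal I i ≤ J) (hsingle : single i i 1 ∈ J) : J = ⊤ := by
  refine eq_top_iff.mpr fun P _ => ?_
  have hrow : single i i 1 * P ∈ J := J.smul_mem (MulOpposite.op P) hsingle
  have hrest : P - single i i 1 * P ∈ rowIdeal I i := fun j => by simp [I.zero_mem]
  simpa using J.add_mem hrow (hJ hrest)

lemma Matrix.isCoatom_rowIdeal (hI : I.IsMaximal) : IsCoatom (rowIdeal I i) := by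
  refine ⟨fun htop => hI.ne_top ?_, fun J hJ => eq_top_of_rowIdeal_le hJ.le
    (single_mem_of_rowIdeal_lt hI hJ)⟩
  have hone : (1 : Matrix n n R) ∈ rowIdeal I i := htop ▸ Submodule.mem_top
  exact (Ideal.eq_top_iff_one I).mpr (by simpa using hone i)

lemma Matrix.isEssentialRightIdeal_rowIdeal {a : R} (haI : a ∈ I) (hreg : a ∈ R⁰) :
    IsEssentialRightIdeal (Matrix n n R) (rowIdeal I i) := by
  refine isEssentialRightIdeal_of_mem_center (c := algebraMap R _ a) (fun j => ?_)
    (Subring.mem_center_iff.mpr fun M => (Algebra.commutes a M).symm) fun M hM => ?_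
  · rw [algebraMap_matrix_apply]
    split_ifs
    exacts [haI, I.zero_mem]
  · rw [← Algebra.commutes, ← Algebra.smul_def] at hM
    ext j k
    simpa [mul_left_mem_nonZeroDivisors_eq_zero_iff hreg] using congr_fun₂ hM j k

end RowIdeal

/-- The ring `M₂(ℤ)` is not δ-reversible. -/
theorem matrix_int_not_deltaReversible :
    ¬ IsDeltaReversible (Matrix (Fin 2) (Fin 2) ℤ) := by
  intro h
  let I : Submodule (Matrix (Fin 2) (Fin 2) ℤ)ᵐᵒᵖ (Matrix (Fin 2) (Fin 2) ℤ) :=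
    rowIdeal (Ideal.span {2}) 0
  have hmax : IsCoatom I := isCoatom_rowIdeal <|
    PrincipalIdealRing.isMaximal_of_irreducible Int.prime_two.irreducible
  have hess : IsEssentialRightIdeal _ I := isEssentialRightIdeal_rowIdeal
    (Ideal.mem_span_singleton_self 2) (mem_nonZeroDivisors_of_ne_zero two_ne_zero)
  have hprod : (single 0 1 1 : Matrix (Fin 2) (Fin 2) ℤ) * single 0 0 1 = 0 :=
    single_mul_single_of_ne 1 0 1 0 (by decide) 1
  have hmem : single 0 0 1 * single 0 1 1 ∈ I := zhouRadical_subset hmax hess (h _ _ hprod)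
  rw [single_mul_single_same, mem_rowIdeal] at hmem
  simpa [Ideal.mem_span_singleton] using hmem 1
end

section
/- Let R be a ring. If the formal power series ring R[[x]] is δ-reversible, then R is δ-reversible. -/
/-!
Along a surjective ring map `φ : S → R`, preimages of maximal right ideals are maximal, and
preimages of essential right ideals are essential: if a right ideal `K` of `S` meets `φ⁻¹(M)`
trivially, its image meets `M` trivially, so `φ(K) = 0` and `K ⊆ ker φ ⊆ φ⁻¹(M)` is itself
zero. Hence `φ(δ(S)) ⊆ δ(R)`. The constant coefficient map `R[[x]] → R` has the ring section
`C`, so `a * b = 0` in `R` gives `C b * C a ∈ δ(R[[x]])`, whose constant coefficient is `b * a`.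
-/

namespace RingHom

variable {S R : Type*} [Ring S] [Ring R]

instance (φ : S →+* R) [RingHomSurjective φ] : RingHomSurjective φ.op :=
  ⟨MulOpposite.op_surjective.comp (φ.surjective.comp MulOpposite.unop_surjective)⟩

@[simps]
def toOpSemilinearMap (φ : S →+* R) : S →ₛₗ[φ.op] R where
  toFun := φ
  map_add' := φ.map_add
  map_smul' s x := φ.map_mul x s.unop

variable (φ : S →+* R) [RingHomSurjective φ]

theorem isEssentialRightIdeal_comap {M : Submodule Rᵐᵒᵖ R} (hM : IsEssentialRightIdeal R M) :
    IsEssentialRightIdeal S (M.comap φ.toOpSemilinearMap) := by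
  intro K hK
  have hmap : K.map φ.toOpSemilinearMap = ⊥ := hM _ <| by
    rw [Submodule.map_inf_eq_map_inf_comap, hK, Submodule.map_bot]
  have hK_le : K ≤ M.comap φ.toOpSemilinearMap := fun k hk => by
    have : φ k = 0 := (Submodule.mem_bot _).1 (hmap ▸ Submodule.mem_map_of_mem hk)
    simp [this]
  rwa [inf_eq_left.2 hK_le] at hK

theorem map_mem_zhouRadical {x : S} (hx : x ∈ zhouRadical S) : φ x ∈ zhouRadical R := by
  rintro _ ⟨M, hM_max, hM_ess, rfl⟩
  exact hx _ ⟨M.comap φ.toOpSemilinearMap, (Submodule.isCoatom_comap_iff φ.surjective).2 hM_max,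
    φ.isEssentialRightIdeal_comap hM_ess, rfl⟩

end RingHom

theorem IsDeltaReversible.of_leftInverse {S R : Type*} [Ring S] [Ring R] (φ : S →+* R)
    (σ : R →+* S) (hσ : Function.LeftInverse φ σ) (h : IsDeltaReversible S) :
    IsDeltaReversible R := by
  intro a b hab
  have : RingHomSurjective φ := ⟨hσ.surjective⟩
  have hδ := φ.map_mem_zhouRadical (h (σ a) (σ b) (by rw [← map_mul, hab, map_zero]))
  rwa [← map_mul, hσ] at hδ

/-- If the power series ring `R[[x]]` is δ-reversible, then so is `R`. -/
theorem deltaReversible_of_powerSeries (R : Type*) [Ring R]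
    (h : IsDeltaReversible (PowerSeries R)) : IsDeltaReversible R :=
  h.of_leftInverse PowerSeries.constantCoeff PowerSeries.C PowerSeries.constantCoeff_C
end

section
/- Let R be a ring and n a positive integer. If the ring T_n(R) of n×n upper triangular matrices over R is δ-reversible, then R is δ-reversible. -/
/-- The ring `T_n(R)` of `n × n` upper triangular matrices over `R`, as a subring of the
matrix ring `M_n(R)`. -/
def upperTriangularRing (R : Type*) [Ring R] (n : ℕ) :
    Subring (Matrix (Fin n) (Fin n) R) where
  carrier := {A | ∀ i j : Fin n, j < i → A i j = 0}
  zero_mem' := by intro i j _; rfl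
  one_mem' := by
    intro i j hij
    exact Matrix.one_apply_ne (ne_of_gt hij)
  add_mem' := by
    intro A B hA hB i j hij
    simp [Matrix.add_apply, hA i j hij, hB i j hij]
  neg_mem' := by
    intro A hA i j hij
    simp [Matrix.neg_apply, hA i j hij]
  mul_mem' := by
    intro A B hA hB i j hij
    rw [Matrix.mul_apply]
    apply Finset.sum_eq_zero
    intro k _
    rcases lt_or_ge k i with h | h
    · rw [hA i k h, zero_mul]
    · rw [hB k j (lt_of_lt_of_le hij h), mul_zero]

/-!
For every index `i`, the diagonal entry `A ↦ Aᵢᵢ` is a surjective ring homomorphism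
`T_n(R) → R`, split by the multiplicative (non-unital) map `r ↦ r Eᵢᵢ`. Pulling right ideals
back along a surjective ring homomorphism preserves both maximality and essentiality, so such a
homomorphism maps `δ(T_n(R))` into `δ(R)`. Hence if `ab = 0` in `R`, then `(aEᵢᵢ)(bEᵢᵢ) = 0`,
so `(bEᵢᵢ)(aEᵢᵢ) = (ba)Eᵢᵢ ∈ δ(T_n(R))` and `ba ∈ δ(R)`.
-/

section

open Function

variable {R S : Type*} [Ring R] [Ring S]

/-- `f` as a semilinear map of right regular modules `S_S → R_R`. -/
def RingHom.toOpSemilinearMap_s17 (f : S →+* R) : S →ₛₗ[RingHom.op f] R where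
  toFun := f
  map_add' := map_add f
  map_smul' c x := by simp [MulOpposite.smul_eq_mul_unop]

theorem RingHomSurjective.op_of_surjective {f : S →+* R} (hf : Surjective f) :
    RingHomSurjective (RingHom.op f) :=
  ⟨MulOpposite.op_surjective.comp (hf.comp MulOpposite.unop_surjective)⟩

theorem IsEssentialRightIdeal.comap {f : S →+* R} (hf : Surjective f) {I : Submodule Rᵐᵒᵖ R}
    (hI : IsEssentialRightIdeal R I) :
    IsEssentialRightIdeal S (I.comap f.toOpSemilinearMap_s17) := by
  have := RingHomSurjective.op_of_surjective hf
  intro K hK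
  have hmap : K.map f.toOpSemilinearMap_s17 = ⊥ :=
    hI _ (by rw [Submodule.map_inf_eq_map_inf_comap, hK, Submodule.map_bot])
  have hker : K ≤ I.comap f.toOpSemilinearMap_s17 :=
    (LinearMap.le_ker_iff_map.2 hmap).trans (LinearMap.ker_le_comap _)
  rwa [inf_eq_left.2 hker] at hK

theorem map_mem_zhouRadical {f : S →+* R} (hf : Surjective f) {x : S}
    (hx : x ∈ zhouRadical S) : f x ∈ zhouRadical R := by
  have := RingHomSurjective.op_of_surjective hf
  rintro _ ⟨I, hIco, hIess, rfl⟩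
  exact hx _ ⟨I.comap f.toOpSemilinearMap_s17,
    (Submodule.isCoatom_comap_iff (f := f.toOpSemilinearMap_s17) hf).2 hIco, hIess.comap hf, rfl⟩

theorem IsDeltaReversible.of_leftInverse_s17 (f : S →+* R) (g : R →ₙ+* S) (hfg : LeftInverse f g)
    (h : IsDeltaReversible S) : IsDeltaReversible R := by
  intro a b hab
  have hg : g a * g b = 0 := by rw [← map_mul, hab, map_zero]
  simpa [hfg b, hfg a] using map_mem_zhouRadical hfg.surjective (h _ _ hg)

namespace upperTriangularRing

variable {n : ℕ}

theorem diag_mul (A B : upperTriangularRing R n) (i : Fin n) :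
    ((A * B : upperTriangularRing R n) : Matrix (Fin n) (Fin n) R) i i =
      (A : Matrix (Fin n) (Fin n) R) i i * (B : Matrix (Fin n) (Fin n) R) i i := by
  refine Finset.sum_eq_single i (fun k _ hk => ?_) (absurd (Finset.mem_univ i))
  obtain hki | hik := hk.lt_or_gt
  exacts [mul_eq_zero_of_left (A.2 i k hki) _, mul_eq_zero_of_right _ (B.2 k i hik)]

def diagEntry (i : Fin n) : upperTriangularRing R n →+* R where
  toFun A := (A : Matrix (Fin n) (Fin n) R) i i
  map_one' := Matrix.one_apply_eq i
  map_mul' A B := diag_mul A B i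
  map_zero' := rfl
  map_add' _ _ := rfl

def single (i : Fin n) : R →ₙ+* upperTriangularRing R n where
  toFun r := ⟨Matrix.single i i r, fun _ _ hji => Matrix.single_apply_of_ne _ _ _ _ _
    (by rintro ⟨rfl, rfl⟩; exact lt_irrefl _ hji)⟩
  map_zero' := Subtype.ext (Matrix.single_zero i i)
  map_add' r s := Subtype.ext (Matrix.single_add i i r s)
  map_mul' r s := Subtype.ext (Matrix.single_mul_single_same r i i i s).symm

theorem diagEntry_single (i : Fin n) (r : R) : diagEntry i (single i r) = r :=
  Matrix.single_apply_same i i r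

end upperTriangularRing

end

/-- If the upper triangular matrix ring `T_n(R)` is δ-reversible, then so is `R`. -/
theorem deltaReversible_of_upperTriangular (R : Type*) [Ring R] (n : ℕ) (hn : 0 < n)
    (h : IsDeltaReversible (upperTriangularRing R n)) : IsDeltaReversible R :=
  h.of_leftInverse_s17 (upperTriangularRing.diagEntry ⟨0, hn⟩) (upperTriangularRing.single ⟨0, hn⟩)
    (upperTriangularRing.diagEntry_single ⟨0, hn⟩)
end

section
/- Let R be a ring and let s, t be central units of R. Then R is δ-reversible if and only if the ring H_{(s,t)}(R) is δ-reversible, where H_{(s,t)}(R) is the subring of M₃(R) consisting of all matrices [[a,0,0],[c,d,e],[0,0,f]] with a, c, d, e, f ∈ R satisfying a − d = sc and d − f = te. -/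
/-- The ring `H_{(s,t)}(R)`: the subring of `M₃(R)` consisting of all matrices
`[[a,0,0],[c,d,e],[0,0,f]]` with `a - d = s * c` and `d - f = t * e`,
where `s` and `t` are central elements of `R`. -/
def HstRing (R : Type*) [Ring R] (s t : R)
    (hs : ∀ r : R, s * r = r * s) (ht : ∀ r : R, t * r = r * t) :
    Subring (Matrix (Fin 3) (Fin 3) R) where
  carrier := {A | A 0 1 = 0 ∧ A 0 2 = 0 ∧ A 2 0 = 0 ∧ A 2 1 = 0 ∧
    A 0 0 - A 1 1 = s * A 1 0 ∧ A 1 1 - A 2 2 = t * A 1 2}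
  zero_mem' := by simp
  one_mem' := by
    refine ⟨?_, ?_, ?_, ?_, ?_, ?_⟩ <;>
      simp [Matrix.one_apply]
  add_mem' := by
    rintro A B ⟨hA01, hA02, hA20, hA21, hAs, hAt⟩ ⟨hB01, hB02, hB20, hB21, hBs, hBt⟩
    refine ⟨?_, ?_, ?_, ?_, ?_, ?_⟩
    · simp [Matrix.add_apply, hA01, hB01]
    · simp [Matrix.add_apply, hA02, hB02]
    · simp [Matrix.add_apply, hA20, hB20]
    · simp [Matrix.add_apply, hA21, hB21]
    · simp only [Matrix.add_apply]
      rw [mul_add, ← hAs, ← hBs]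
      abel
    · simp only [Matrix.add_apply]
      rw [mul_add, ← hAt, ← hBt]
      abel
  neg_mem' := by
    rintro A ⟨hA01, hA02, hA20, hA21, hAs, hAt⟩
    refine ⟨?_, ?_, ?_, ?_, ?_, ?_⟩
    · simp [Matrix.neg_apply, hA01]
    · simp [Matrix.neg_apply, hA02]
    · simp [Matrix.neg_apply, hA20]
    · simp [Matrix.neg_apply, hA21]
    · simp only [Matrix.neg_apply]
      rw [mul_neg, ← hAs]
      abel
    · simp only [Matrix.neg_apply]
      rw [mul_neg, ← hAt]
      abel
  mul_mem' := by
    rintro A B ⟨hA01, hA02, hA20, hA21, hAs, hAt⟩ ⟨hB01, hB02, hB20, hB21, hBs, hBt⟩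
    refine ⟨?_, ?_, ?_, ?_, ?_, ?_⟩
    · simp [Matrix.mul_apply, Fin.sum_univ_three, hA01, hA02, hB01]
    · simp [Matrix.mul_apply, Fin.sum_univ_three, hA01, hA02, hB02]
    · simp [Matrix.mul_apply, Fin.sum_univ_three, hA20, hA21, hB20]
    · simp [Matrix.mul_apply, Fin.sum_univ_three, hA20, hA21, hB21]
    · simp only [Matrix.mul_apply, Fin.sum_univ_three, hA01, hA02, hB01, hB20, hB21,
        zero_mul, mul_zero, add_zero, zero_add]
      rw [mul_add, ← mul_assoc, ← mul_assoc, ← hAs, hs (A 1 1),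
        mul_assoc (A 1 1) s (B 1 0), ← hBs]
      noncomm_ring
    · simp only [Matrix.mul_apply, Fin.sum_univ_three, hA20, hA21, hB01, hB02, hB21,
        zero_mul, mul_zero, add_zero, zero_add]
      rw [mul_add, ← mul_assoc, ← mul_assoc, ht (A 1 1),
        mul_assoc (A 1 1) t (B 1 2), ← hBt, ← hAt]
      noncomm_ring

/-!
Everything in the definition of `δ` is expressed through the lattice of right ideals (maximality,
essentiality) and membership, so `δ`-reversibility is invariant under ring isomorphisms. The right
ideals of `A × B` are exactly the products `I × J`, and the essential maximal ones are `M × B` and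
`A × N` with `M`, `N` essential maximal; hence `δ(A × B) = δ(A) × δ(B)` and `A × B` is
`δ`-reversible iff both factors are. Finally, `H_{(s,t)}(R) ≅ R × R × R` via the diagonal: the
zero pattern makes the diagonal of a product the product of the diagonals, and since `s`, `t` are
units the relations `a - d = s c`, `d - f = t e` recover `c` and `e` from the diagonal.
-/

open MulOpposite

section Lattice

variable {α β : Type*}

def IsEssential [SemilatticeInf α] [OrderBot α] (a : α) : Prop :=
  ∀ b, b ⊓ a = ⊥ → b = ⊥

lemma isEssential_top [SemilatticeInf α] [BoundedOrder α] : IsEssential (⊤ : α) := by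
  simp [IsEssential]

lemma OrderIso.isEssential_iff [SemilatticeInf α] [OrderBot α] [SemilatticeInf β] [OrderBot β]
    (f : α ≃o β) (a : α) : IsEssential (f a) ↔ IsEssential a := by
  simp only [IsEssential, f.surjective.forall, ← map_inf, map_eq_bot_iff]

lemma Prod.isEssential_iff [SemilatticeInf α] [OrderBot α] [SemilatticeInf β] [OrderBot β]
    {a : α} {b : β} :
    IsEssential (a, b) ↔ IsEssential a ∧ IsEssential b := by
  refine ⟨fun h ↦ ⟨fun k hk ↦ ?_, fun l hl ↦ ?_⟩, fun ⟨ha, hb⟩ ⟨k, l⟩ hkl ↦ ?_⟩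
  · exact congrArg Prod.fst (h (k, ⊥) (Prod.ext hk (bot_inf_eq b)))
  · exact congrArg Prod.snd (h (⊥, l) (Prod.ext (bot_inf_eq a) hl))
  · exact Prod.ext (ha k (congrArg Prod.fst hkl)) (hb l (congrArg Prod.snd hkl))

lemma Prod.isCoatom_iff [PartialOrder α] [OrderTop α] [PartialOrder β] [OrderTop β]
    {a : α} {b : β} :
    IsCoatom (a, b) ↔ IsCoatom a ∧ b = ⊤ ∨ IsCoatom b ∧ a = ⊤ := by
  simp only [← covBy_top_iff]
  exact Prod.mk_covBy_mk_iff

end Lattice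

section ZhouRadical

variable {A B : Type*} [Ring A] [Ring B]

lemma mem_zhouRadical_iff_s18 {x : A} :
    x ∈ zhouRadical A ↔ ∀ I : Submodule Aᵐᵒᵖ A, IsCoatom I → IsEssential I → x ∈ I :=
  ⟨fun h I hI hI' ↦ h I ⟨I, hI, hI', rfl⟩, by rintro h _ ⟨I, hI, hI', rfl⟩; exact h I hI hI'⟩

lemma mem_zhouRadical_iff_of_orderIso {L : Type*} [SemilatticeInf L] [BoundedOrder L]
    (F : L ≃o Submodule Aᵐᵒᵖ A) {x : A} {p : L → Prop} (hp : ∀ l, x ∈ F l ↔ p l) :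
    x ∈ zhouRadical A ↔ ∀ l, IsCoatom l → IsEssential l → p l := by
  simp only [mem_zhouRadical_iff_s18, F.surjective.forall, F.isCoatom_iff, F.isEssential_iff, hp]

/-- A ring isomorphism `e` is semilinear for `e.op` when rings act on themselves on the right. -/
def RingEquiv.rightIdealOrderIso (e : A ≃+* B) : Submodule Aᵐᵒᵖ A ≃o Submodule Bᵐᵒᵖ B :=
  Submodule.orderIsoMapComapOfBijective (σ₁₂ := (RingEquiv.op e : Aᵐᵒᵖ →+* Bᵐᵒᵖ))
    { toFun := e, map_add' := map_add e, map_smul' := fun c x ↦ map_mul e x (unop c) }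
    e.bijective

lemma RingEquiv.mem_zhouRadical_iff (e : A ≃+* B) {x : A} :
    x ∈ zhouRadical A ↔ e x ∈ zhouRadical B := by
  rw [mem_zhouRadical_iff_of_orderIso e.rightIdealOrderIso.symm (p := (e x ∈ ·)) fun _ ↦ Iff.rfl,
    _root_.mem_zhouRadical_iff_s18]

lemma IsDeltaReversible.of_ringEquiv (e : A ≃+* B) (h : IsDeltaReversible A) :
    IsDeltaReversible B := by
  intro a b hab
  have := e.mem_zhouRadical_iff.1 <| h (e.symm a) (e.symm b) (by rw [← map_mul, hab, map_zero])
  rwa [map_mul, e.apply_symm_apply, e.apply_symm_apply] at this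

lemma RingEquiv.isDeltaReversible_iff (e : A ≃+* B) :
    IsDeltaReversible A ↔ IsDeltaReversible B :=
  ⟨.of_ringEquiv e, .of_ringEquiv e.symm⟩

end ZhouRadical

section Prod

variable {A B : Type*} [Ring A] [Ring B]

def rightIdealProd (I : Submodule Aᵐᵒᵖ A) (J : Submodule Bᵐᵒᵖ B) :
    Submodule (A × B)ᵐᵒᵖ (A × B) where
  carrier := {x | x.1 ∈ I ∧ x.2 ∈ J}
  zero_mem' := ⟨I.zero_mem, J.zero_mem⟩
  add_mem' hx hy := ⟨I.add_mem hx.1 hy.1, J.add_mem hx.2 hy.2⟩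
  smul_mem' c _ hx := ⟨I.smul_mem (op (unop c).1) hx.1, J.smul_mem (op (unop c).2) hx.2⟩

def rightIdealFst (K : Submodule (A × B)ᵐᵒᵖ (A × B)) : Submodule Aᵐᵒᵖ A where
  carrier := {a | (a, 0) ∈ K}
  zero_mem' := K.zero_mem
  add_mem' ha hb := by simpa using K.add_mem ha hb
  smul_mem' c _ ha := by simpa using K.smul_mem (op (unop c, 1)) ha

def rightIdealSnd (K : Submodule (A × B)ᵐᵒᵖ (A × B)) : Submodule Bᵐᵒᵖ B where
  carrier := {b | (0, b) ∈ K}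
  zero_mem' := K.zero_mem
  add_mem' ha hb := by simpa using K.add_mem ha hb
  smul_mem' c _ hb := by simpa using K.smul_mem (op (1, unop c)) hb

/-- Multiplying on the right by the idempotents `(1, 0)` and `(0, 1)` splits `x ∈ K`. -/
lemma mem_rightIdeal_prod_iff (K : Submodule (A × B)ᵐᵒᵖ (A × B)) (x : A × B) :
    x ∈ K ↔ (x.1, 0) ∈ K ∧ (0, x.2) ∈ K := by
  refine ⟨fun hx ↦ ⟨?_, ?_⟩, fun h ↦ by simpa using K.add_mem h.1 h.2⟩
  · simpa [Prod.mul_def] using K.smul_mem (op (1, 0)) hx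
  · simpa [Prod.mul_def] using K.smul_mem (op (0, 1)) hx

def rightIdealProdOrderIso :
    Submodule Aᵐᵒᵖ A × Submodule Bᵐᵒᵖ B ≃o Submodule (A × B)ᵐᵒᵖ (A × B) where
  toFun p := rightIdealProd p.1 p.2
  invFun K := (rightIdealFst K, rightIdealSnd K)
  left_inv p := by
    ext x
    · exact and_iff_left p.2.zero_mem
    · exact and_iff_right p.1.zero_mem
  right_inv K := by
    ext x
    exact (mem_rightIdeal_prod_iff K x).symm
  map_rel_iff' {p q} := by
    refine ⟨fun h ↦ ⟨fun a ha ↦ (@h (a, 0) ⟨ha, p.2.zero_mem⟩).1,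
      fun b hb ↦ (@h (0, b) ⟨p.1.zero_mem, hb⟩).2⟩, fun h x hx ↦ ⟨h.1 hx.1, h.2 hx.2⟩⟩

lemma mem_rightIdealProdOrderIso {p : Submodule Aᵐᵒᵖ A × Submodule Bᵐᵒᵖ B} {x : A × B} :
    x ∈ rightIdealProdOrderIso p ↔ x.1 ∈ p.1 ∧ x.2 ∈ p.2 :=
  Iff.rfl

lemma mem_zhouRadical_prod_iff {x : A × B} :
    x ∈ zhouRadical (A × B) ↔ x.1 ∈ zhouRadical A ∧ x.2 ∈ zhouRadical B := by
  rw [mem_zhouRadical_iff_of_orderIso (rightIdealProdOrderIso (A := A) (B := B))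
    fun _ ↦ mem_rightIdealProdOrderIso, mem_zhouRadical_iff_s18, mem_zhouRadical_iff_s18]
  simp only [Prod.forall, Prod.isCoatom_iff, Prod.isEssential_iff]
  refine ⟨fun h ↦ ⟨fun I hI hI' ↦ ?_, fun J hJ hJ' ↦ ?_⟩, ?_⟩
  · exact (h I ⊤ (.inl ⟨hI, rfl⟩) ⟨hI', isEssential_top⟩).1
  · exact (h ⊤ J (.inr ⟨hJ, rfl⟩) ⟨isEssential_top, hJ'⟩).2
  · rintro ⟨h₁, h₂⟩ I J (⟨hI, rfl⟩ | ⟨hJ, rfl⟩) ⟨hI', hJ'⟩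
    · exact ⟨h₁ I hI hI', trivial⟩
    · exact ⟨trivial, h₂ J hJ hJ'⟩

lemma isDeltaReversible_prod_iff :
    IsDeltaReversible (A × B) ↔ IsDeltaReversible A ∧ IsDeltaReversible B := by
  simp only [IsDeltaReversible, mem_zhouRadical_prod_iff, Prod.forall, Prod.mk_mul_mk,
    Prod.mk_eq_zero]
  refine ⟨fun h ↦ ⟨fun a a' ha ↦ (h a 0 a' 0 ⟨ha, mul_zero 0⟩).1,
      fun b b' hb ↦ (h 0 b 0 b' ⟨mul_zero 0, hb⟩).2⟩,
    fun h a b a' b' hab ↦ ⟨h.1 a a' hab.1, h.2 b b' hab.2⟩⟩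

end Prod

namespace HstRing

variable {R : Type*} [Ring R] {s t : R} {hs : ∀ r : R, s * r = r * s}
  {ht : ∀ r : R, t * r = r * t}

@[simps]
def diagonalHom : HstRing R s t hs ht →+* R × R × R where
  toFun A := (A.1 0 0, A.1 1 1, A.1 2 2)
  map_one' := by simp
  map_zero' := rfl
  map_add' _ _ := rfl
  map_mul' A B := by
    obtain ⟨hA01, hA02, hA20, hA21, -, -⟩ := A.2
    obtain ⟨hB01, hB02, hB20, hB21, -, -⟩ := B.2
    simp [Matrix.mul_apply, Fin.sum_univ_three, hA01, hA02, hA20, hA21, hB01, hB02, hB20, hB21]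

lemma diagonalHom_injective (hsu : IsUnit s) (htu : IsUnit t) :
    Function.Injective (diagonalHom : HstRing R s t hs ht →+* R × R × R) := by
  intro A B h
  obtain ⟨h00, h11, h22⟩ : A.1 0 0 = B.1 0 0 ∧ A.1 1 1 = B.1 1 1 ∧ A.1 2 2 = B.1 2 2 := by
    simpa using h
  obtain ⟨hA01, hA02, hA20, hA21, hAs, hAt⟩ := A.2
  obtain ⟨hB01, hB02, hB20, hB21, hBs, hBt⟩ := B.2
  have h10 : A.1 1 0 = B.1 1 0 := hsu.mul_left_cancel (by rw [← hAs, ← hBs, h00, h11])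
  have h12 : A.1 1 2 = B.1 1 2 := htu.mul_left_cancel (by rw [← hAt, ← hBt, h11, h22])
  ext i j
  fin_cases i <;> fin_cases j <;> simp [*]

lemma diagonalHom_surjective (hsu : IsUnit s) (htu : IsUnit t) :
    Function.Surjective (diagonalHom : HstRing R s t hs ht →+* R × R × R) := by
  rintro ⟨a, d, f⟩
  refine ⟨⟨!![a, 0, 0; Ring.inverse s * (a - d), d, Ring.inverse t * (d - f); 0, 0, f],
    ?_, ?_, ?_, ?_, ?_, ?_⟩, rfl⟩
  all_goals simp [← mul_assoc, Ring.mul_inverse_cancel, hsu, htu]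

noncomputable def diagonalEquiv (hsu : IsUnit s) (htu : IsUnit t) :
    HstRing R s t hs ht ≃+* R × R × R :=
  .ofBijective diagonalHom ⟨diagonalHom_injective hsu htu, diagonalHom_surjective hsu htu⟩

end HstRing

/-- `R` is δ-reversible iff `H_{(s,t)}(R)` is δ-reversible, for central units `s, t`. -/
theorem deltaReversible_iff_Hst (R : Type*) [Ring R] (s t : R)
    (hs : ∀ r : R, s * r = r * s) (ht : ∀ r : R, t * r = r * t)
    (hsu : IsUnit s) (htu : IsUnit t) :
    IsDeltaReversible R ↔ IsDeltaReversible (HstRing R s t hs ht) := by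
  rw [(HstRing.diagonalEquiv hsu htu).isDeltaReversible_iff, isDeltaReversible_prod_iff,
    isDeltaReversible_prod_iff]
  exact ⟨fun h ↦ ⟨h, h, h⟩, And.left⟩
end
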